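/- Let Â = Ã_rw + (β/(α+β))·D̃^{-1}(nI − J_n) with α > 0 and 0 < β < 1/n. Then every eigenvalue λ of Â satisfies λ ≤ 1 + βn/(α+β), and consequently I − μÂ is invertible where μ = (α+β)/(1+α+β). -/

import Mathlib

/-- For `Â = Ã_rw + (β/(α+β)) D̃⁻¹(nI − J)` with `α > 0` and `0 < β < 1/n`, every
eigenvalue `λ` of `Â` satisfies `λ ≤ 1 + βn/(α+β)`, and `I − μÂ` is invertible
where `μ = (α+β)/(1+α+β)`. -/
theorem gcn_plus_kernel_invertible (n : ℕ) (hn : 0 < n)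
    (A : Matrix (Fin n) (Fin n) ℝ) (hA : A.IsSymm)
    (h01 : ∀ i j, A i j = 0 ∨ A i j = 1)
    (dt : Fin n → ℝ) (hdt : ∀ i, dt i = ∑ j, (A + 1) i j) (hpos : ∀ i, 0 < dt i)
    (α β : ℝ) (hα : 0 < α) (hβ0 : 0 < β) (hβ : β < 1 / n)
    (J : Matrix (Fin n) (Fin n) ℝ) (hJ : ∀ i j, J i j = 1)
    (Ahat : Matrix (Fin n) (Fin n) ℝ)
    (hAhat : Ahat = (Matrix.diagonal dt)⁻¹ * (A + 1) +
      (β / (α + β)) • ((Matrix.diagonal dt)⁻¹ *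
        ((n : ℝ) • (1 : Matrix (Fin n) (Fin n) ℝ) - J)))
    (μ : ℝ) (hμ : μ = (α + β) / (1 + α + β)) :
    (∀ l ∈ spectrum ℝ Ahat, l ≤ 1 + β * n / (α + β)) ∧
    IsUnit ((1 : Matrix (Fin n) (Fin n) ℝ) - μ • Ahat) := by
  have hαβ : 0 < α + β := by linarith
  set c : ℝ := β / (α + β) with hc
  have hc0 : 0 < c := div_pos hβ0 hαβ
  have hAnn : ∀ i j, 0 ≤ A i j := by
    intro i j; rcases h01 i j with h | h <;> simp [h]
  -- entries of A+1
  have hA1 : ∀ i j, (A + 1) i j = A i j + (if i = j then (1:ℝ) else 0) := by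
    intro i j; simp [Matrix.add_apply, Matrix.one_apply]
  have hA1nn : ∀ i j, 0 ≤ (A + 1) i j := by
    intro i j; rw [hA1]; have := hAnn i j; split <;> linarith
  have hA1symm : ∀ i j, (A + 1) i j = (A + 1) j i := by
    intro i j; rw [hA1, hA1, hA.apply i j]
    congr 1
    simp [eq_comm]
  have hdt1 : ∀ i, 1 ≤ dt i := by
    intro i
    rw [hdt i]
    have h1 : (1:ℝ) ≤ (A + 1) i i := by
      rw [hA1, if_pos rfl]; linarith [hAnn i i]
    exact le_trans h1 (Finset.single_le_sum (fun j _ => hA1nn i j) (Finset.mem_univ i))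
  -- D * Ahat = M
  set D := Matrix.diagonal dt with hD
  have hdet : IsUnit D.det := by
    rw [hD, Matrix.det_diagonal]
    exact isUnit_iff_ne_zero.mpr
      (Finset.prod_ne_zero_iff.mpr fun i _ => (hpos i).ne')
  have hDinv : D * D⁻¹ = 1 := Matrix.mul_nonsing_inv _ hdet
  have hDA : D * Ahat = (A + 1) + c • ((n : ℝ) • 1 - J) := by
    rw [hAhat, Matrix.mul_add, Matrix.mul_smul, ← Matrix.mul_assoc, ← Matrix.mul_assoc,
      hDinv, Matrix.one_mul, Matrix.one_mul]
  -- Key: any real eigenvalue is at most 1 + c n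
  have key : ∀ (l : ℝ) (x : Fin n → ℝ), x ≠ 0 → Ahat.mulVec x = l • x →
      l ≤ 1 + c * n := by
    intro l x hx hlx
    have hMx : ∀ i, (∑ j, ((A + 1) i j + c * ((n : ℝ) * (if i = j then (1:ℝ) else 0) - 1)) * x j)
        = l * (dt i * x i) := by
      intro i
      have h1 : ((A + 1) + c • ((n : ℝ) • 1 - J)).mulVec x i = l * (dt i * x i) := by
        rw [← hDA, ← Matrix.mulVec_mulVec, hlx, hD, Matrix.mulVec_diagonal]
        simp only [Pi.smul_apply, smul_eq_mul]
        ring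
      rw [← h1]
      simp only [Matrix.mulVec, dotProduct, Matrix.add_apply, Matrix.smul_apply,
        Matrix.sub_apply, Matrix.one_apply, hJ, smul_eq_mul]
    set S : ℝ := ∑ i, dt i * x i ^ 2 with hS
    set T : ℝ := ∑ i, ∑ j, (A + 1) i j * (x i * x j) with hT
    set Q : ℝ := ∑ i, x i ^ 2 with hQ
    set P : ℝ := ∑ i, x i with hP
    have hSpos : 0 < S := by
      obtain ⟨i, hi⟩ : ∃ i, x i ≠ 0 := by
        by_contra h
        push_neg at h
        exact hx (funext h)
      apply Finset.sum_pos' (fun j _ => mul_nonneg (hpos j).le (sq_nonneg _))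
      exact ⟨i, Finset.mem_univ i, mul_pos (hpos i) (by positivity)⟩
    -- l * S = T + c * (n * Q - P^2)
    have hLS : l * S = T + c * ((n : ℝ) * Q - P * P) := by
      have e1 : l * S = ∑ i, x i * (l * (dt i * x i)) := by
        rw [hS, Finset.mul_sum]
        exact Finset.sum_congr rfl fun i _ => by ring
      rw [e1]
      have e2 : ∀ i, x i * (l * (dt i * x i)) =
          ∑ j, (((A + 1) i j * (x i * x j)) + c * (n : ℝ) * (if i = j then (1:ℝ) else 0) * (x i * x j)
            - c * (x i * x j)) := by
        intro i
        rw [← hMx i, Finset.mul_sum]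
        exact Finset.sum_congr rfl fun j _ => by ring
      rw [Finset.sum_congr rfl fun i _ => e2 i]
      have e3 : ∀ i, (∑ j, (((A + 1) i j * (x i * x j))
            + c * (n : ℝ) * (if i = j then (1:ℝ) else 0) * (x i * x j)
            - c * (x i * x j))) =
          (∑ j, (A + 1) i j * (x i * x j)) + c * (n : ℝ) * (x i * x i)
            - c * (x i * ∑ j, x j) := by
        intro i
        have d1 : (∑ j, c * (n : ℝ) * (if i = j then (1:ℝ) else 0) * (x i * x j))
            = c * (n : ℝ) * (x i * x i) := by
          simp only [mul_ite, mul_one, mul_zero, ite_mul, zero_mul,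
            Finset.sum_ite_eq, Finset.mem_univ, if_true]
        have d2 : (∑ j, c * (x i * x j)) = c * (x i * ∑ j, x j) := by
          rw [Finset.mul_sum (Finset.univ) x (x i), Finset.mul_sum]
        rw [Finset.sum_sub_distrib, Finset.sum_add_distrib, d1, d2]
      rw [Finset.sum_congr rfl fun i _ => e3 i, Finset.sum_sub_distrib, Finset.sum_add_distrib]
      rw [hT, hQ, hP]
      have e4 : ∑ i, c * (n:ℝ) * (x i * x i) = c * (n:ℝ) * ∑ i, x i ^ 2 := by
        rw [Finset.mul_sum]; exact Finset.sum_congr rfl fun i _ => by ring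
      have e5 : ∑ i, c * (x i * ∑ j, x j) = c * ((∑ i, x i) * (∑ j, x j)) :=
        calc ∑ i, c * (x i * ∑ j, x j) = ∑ i, (c * ∑ j, x j) * x i :=
              Finset.sum_congr rfl fun i _ => by ring
          _ = (c * ∑ j, x j) * ∑ i, x i := (Finset.mul_sum _ _ _).symm
          _ = c * ((∑ i, x i) * (∑ j, x j)) := by ring
      rw [e4, e5]; ring
    -- T ≤ S
    have hTS : T ≤ S := by
      have hexp : ∑ i, ∑ j, (A + 1) i j * (x i - x j) ^ 2 = S + S - 2 * T := by
        have e1 : ∀ i j, (A + 1) i j * (x i - x j) ^ 2 =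
            (A + 1) i j * x i ^ 2 + (A + 1) i j * x j ^ 2
              - 2 * ((A + 1) i j * (x i * x j)) := fun i j => by ring
        simp only [e1]
        rw [Finset.sum_congr rfl fun i (_ : i ∈ Finset.univ) =>
          (Finset.sum_sub_distrib (s := Finset.univ) _ _)]
        rw [Finset.sum_sub_distrib]
        rw [Finset.sum_congr rfl fun i (_ : i ∈ Finset.univ) =>
          (Finset.sum_add_distrib (s := Finset.univ))]
        rw [Finset.sum_add_distrib]
        have e2 : ∑ i, ∑ j, (A + 1) i j * x i ^ 2 = S := by
          rw [hS]
          refine Finset.sum_congr rfl fun i _ => ?_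
          rw [← Finset.sum_mul, ← hdt i]
        have e3 : ∑ i, ∑ j, (A + 1) i j * x j ^ 2 = S := by
          rw [Finset.sum_comm]
          rw [hS]
          refine Finset.sum_congr rfl fun j _ => ?_
          rw [← Finset.sum_mul]
          congr 1
          rw [hdt j]
          exact Finset.sum_congr rfl fun i _ => hA1symm i j
        have e4 : ∑ i, ∑ j, 2 * ((A + 1) i j * (x i * x j)) = 2 * T := by
          rw [hT, Finset.mul_sum]
          exact Finset.sum_congr rfl fun i _ => by rw [Finset.mul_sum]
        rw [e2, e3, e4]
      have hnn : 0 ≤ ∑ i, ∑ j, (A + 1) i j * (x i - x j) ^ 2 :=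
        Finset.sum_nonneg fun i _ => Finset.sum_nonneg fun j _ =>
          mul_nonneg (hA1nn i j) (sq_nonneg _)
      linarith [hexp ▸ hnn]
    -- Q ≤ S
    have hQS : Q ≤ S := by
      apply Finset.sum_le_sum
      intro i _
      exact le_mul_of_one_le_left (sq_nonneg _) (hdt1 i)
    have hQnn : 0 ≤ Q := Finset.sum_nonneg fun i _ => sq_nonneg _
    -- conclude
    have hbound : l * S ≤ (1 + c * n) * S := by
      have h1 : c * ((n : ℝ) * Q - P * P) ≤ c * ((n : ℝ) * S) := by
        apply mul_le_mul_of_nonneg_left _ hc0.le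
        have : (n : ℝ) * Q ≤ (n : ℝ) * S :=
          mul_le_mul_of_nonneg_left hQS (Nat.cast_nonneg n)
        nlinarith [sq_nonneg P, mul_self_nonneg P]
      calc l * S = T + c * ((n : ℝ) * Q - P * P) := hLS
        _ ≤ S + c * ((n : ℝ) * S) := add_le_add hTS h1
        _ = (1 + c * n) * S := by ring
    exact le_of_mul_le_mul_right (by linarith [hbound]) hSpos
  have hcn : c * n = β * n / (α + β) := by
    rw [hc]; ring
  constructor
  · intro l hl
    rw [spectrum.mem_iff] at hl
    have halg : (algebraMap ℝ (Matrix (Fin n) (Fin n) ℝ)) l = l • 1 :=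
      Algebra.algebraMap_eq_smul_one l
    rw [halg] at hl
    have hdet0 : (l • (1 : Matrix (Fin n) (Fin n) ℝ) - Ahat).det = 0 := by
      by_contra h
      exact hl ((Matrix.isUnit_iff_isUnit_det _).mpr (isUnit_iff_ne_zero.mpr h))
    obtain ⟨v, hv0, hv⟩ := (Matrix.exists_mulVec_eq_zero_iff).mpr hdet0
    have hev : Ahat.mulVec v = l • v := by
      have := hv
      rw [Matrix.sub_mulVec, Matrix.smul_mulVec, Matrix.one_mulVec, sub_eq_zero] at this
      exact this.symm
    have := key l v hv0 hev
    rwa [hcn] at this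
  · rw [Matrix.isUnit_iff_isUnit_det, isUnit_iff_ne_zero]
    intro hdet0
    obtain ⟨v, hv0, hv⟩ := (Matrix.exists_mulVec_eq_zero_iff).mpr hdet0
    have hμpos : 0 < μ := by rw [hμ]; positivity
    have hev : Ahat.mulVec v = μ⁻¹ • v := by
      rw [Matrix.sub_mulVec, Matrix.one_mulVec, Matrix.smul_mulVec, sub_eq_zero] at hv
      have : μ • Ahat.mulVec v = v := hv.symm
      calc Ahat.mulVec v = μ⁻¹ • (μ • Ahat.mulVec v) := by
            rw [smul_smul, inv_mul_cancel₀ hμpos.ne', one_smul]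
        _ = μ⁻¹ • v := by rw [this]
    have hle := key μ⁻¹ v hv0 hev
    have hμinv : μ⁻¹ = 1 + 1 / (α + β) := by
      rw [hμ]
      field_simp
      ring
    have hβn : β * n < 1 := by
      rcases Nat.eq_zero_or_pos n with h | h
      · omega
      · have : β * n < (1 / n) * n := by
          apply mul_lt_mul_of_pos_right hβ
          exact_mod_cast h
        rwa [one_div, inv_mul_cancel₀ (by exact_mod_cast h.ne' : (n:ℝ) ≠ 0)] at this
    have : c * n < 1 / (α + β) := by
      rw [hcn, div_lt_div_iff₀ hαβ hαβ]
      nlinarith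
    rw [hμinv] at hle
    rw [hcn] at this
    linarith
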